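/- The weaving operation on trace structures is associative: for trace structures R, S, T, (R || S) || T = R || (S || T). -/

import Mathlib

/-- A trace structure: input alphabet, output alphabet, and a set of traces. -/
structure TraceStructure (α : Type*) where
  i : Set α
  o : Set α
  t : Set (List α)

namespace TraceStructure

variable {α : Type*}

/-- Total alphabet. -/
def alph (R : TraceStructure α) : Set α := R.i ∪ R.o

/-- Projection of a trace onto an alphabet: delete all symbols not in `A`. -/
noncomputable def projT (A : Set α) (w : List α) : List α :=
  w.filter (fun x => @decide (x ∈ A) (Classical.propDecidable _))

/-- Reflection: swap input and output alphabets. -/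
def reflect (R : TraceStructure α) : TraceStructure α := ⟨R.o, R.i, R.t⟩

/-- Weave of two trace structures. -/
noncomputable def weave (R S : TraceStructure α) : TraceStructure α :=
  ⟨R.i ∪ S.i, R.o ∪ S.o,
   {w | (∀ x ∈ w, x ∈ R.alph ∪ S.alph) ∧ projT R.alph w ∈ R.t ∧ projT S.alph w ∈ S.t}⟩

/-- Union of two trace structures. -/
def tsUnion (R S : TraceStructure α) : TraceStructure α :=
  ⟨R.i ∪ S.i, R.o ∪ S.o, R.t ∪ S.t⟩

/-- Projection of a trace structure onto an alphabet `A`. -/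
noncomputable def tsProj (R : TraceStructure α) (A : Set α) : TraceStructure α :=
  ⟨R.i ∩ A, R.o ∩ A, {w | ∃ u ∈ R.t, w = projT A u}⟩

/-- Prefix closure of a set of traces. -/
def prefSet (T : Set (List α)) : Set (List α) := {s | ∃ u, s ++ u ∈ T}

/-- Prefix closure of a trace structure. -/
def pref (R : TraceStructure α) : TraceStructure α := ⟨R.i, R.o, prefSet R.t⟩

/-- Kleene star (arbitrary repetition) of a set of traces. -/
def star (L : Set (List α)) : Set (List α) :=
  {w | ∃ ls : List (List α), (∀ u ∈ ls, u ∈ L) ∧ w = ls.flatten}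

/-- A set of traces is prefix-closed. -/
def PrefixClosed (T : Set (List α)) : Prop := ∀ s u : List α, s ++ u ∈ T → s ∈ T

/-- Rule R₀: no two consecutive transitions on the same wire. -/
def SatR0 (R : TraceStructure α) : Prop :=
  ∀ s ∈ R.t, ∀ x ∈ R.alph, s ++ [x, x] ∉ R.t

/-- Rule R₁: symbols of the same type commute. -/
def SatR1 (R : TraceStructure α) : Prop :=
  ∀ (s t : List α) (x y : α),
    ((x ∈ R.i ∧ y ∈ R.i) ∨ (x ∈ R.o ∧ y ∈ R.o)) →
    (s ++ [x, y] ++ t ∈ R.t ↔ s ++ [y, x] ++ t ∈ R.t)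

/-- Rule R₂′. -/
def SatR2' (R : TraceStructure α) : Prop :=
  ∀ (s t : List α) (x y z : α),
    ((x ∈ R.i ∧ z ∈ R.i ∧ y ∈ R.o) ∨ (x ∈ R.o ∧ z ∈ R.o ∧ y ∈ R.i)) →
    s ++ [x, y] ++ t ++ [z] ∈ R.t → s ++ [y, x] ++ t ∈ R.t →
    s ++ [y, x] ++ t ++ [z] ∈ R.t

/-- Rule R₃′ (synchronization class). -/
def SatR3' (R : TraceStructure α) : Prop :=
  ∀ (s : List α) (x y : α), x ≠ y → x ∈ R.alph → y ∈ R.alph →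
    s ++ [x] ∈ R.t → s ++ [y] ∈ R.t → s ++ [x, y] ∈ R.t

/-- Rule R₃′′ (data communication class). -/
def SatR3'' (R : TraceStructure α) : Prop :=
  ∀ (s : List α) (x y : α), x ≠ y → x ∈ R.alph → y ∈ R.alph →
    ¬(x ∈ R.i ∧ y ∈ R.i) →
    s ++ [x] ∈ R.t → s ++ [y] ∈ R.t → s ++ [x, y] ∈ R.t

/-- Rule R₃′′′ (arbitration class). -/
def SatR3''' (R : TraceStructure α) : Prop :=
  ∀ (s : List α) (x y : α),
    ((x ∈ R.i ∧ y ∈ R.o) ∨ (x ∈ R.o ∧ y ∈ R.i)) →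
    s ++ [x] ∈ R.t → s ++ [y] ∈ R.t → s ++ [x, y] ∈ R.t

/-- The WIRE component `pref *[a?; b!]`. -/
def wire (a b : α) : TraceStructure α :=
  ⟨{a}, {b}, prefSet (star {[a, b]})⟩

/-- The C-element `pref *[(a? || b?); c!]`. -/
def cElement (a b c : α) : TraceStructure α :=
  ⟨{a, b}, {c}, prefSet (star ({[a, b, c], [b, a, c]} : Set (List α)))⟩

/-- Interleaving (shuffle) of two traces. -/
inductive Interleave : List α → List α → List α → Prop
  | nil : Interleave [] [] []
  | left {x : α} {u v t : List α} : Interleave u v t → Interleave (x :: u) v (x :: t)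
  | right {x : α} {u v t : List α} : Interleave u v t → Interleave u (x :: v) (x :: t)

/-! Projecting onto a subalphabet of `B` factors through projecting onto `B`, and a projected
trace automatically lies over its alphabet. Hence both sides consist of the traces over
`aR ∪ aS ∪ aT` whose projections onto `aR`, `aS`, `aT` lie in `tR`, `tS`, `tT`. -/

theorem ext {R S : TraceStructure α} (hi : R.i = S.i) (ho : R.o = S.o) (ht : R.t = S.t) :
    R = S := by
  cases R; cases S; simp_all

theorem mem_of_mem_projT {A : Set α} {w : List α} {x : α} (hx : x ∈ projT A w) : x ∈ A := by
  simp only [projT, List.mem_filter, decide_eq_true_eq] at hx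
  exact hx.2

theorem projT_projT_of_subset {A B : Set α} (h : A ⊆ B) (w : List α) :
    projT A (projT B w) = projT A w := by
  simp only [projT, List.filter_filter]
  refine List.filter_congr fun x _ => ?_
  by_cases hx : x ∈ A
  · simp [hx, h hx]
  · simp [hx]

theorem alph_weave (R S : TraceStructure α) : (weave R S).alph = R.alph ∪ S.alph := by
  ext x; simp only [alph, weave, Set.mem_union]; tauto

theorem mem_weave_t {R S : TraceStructure α} {w : List α} :
    w ∈ (weave R S).t ↔
      (∀ x ∈ w, x ∈ R.alph ∪ S.alph) ∧ projT R.alph w ∈ R.t ∧ projT S.alph w ∈ S.t :=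
  Iff.rfl

theorem projT_alph_mem_weave_t_iff (R S : TraceStructure α) (w : List α) :
    projT (weave R S).alph w ∈ (weave R S).t ↔ projT R.alph w ∈ R.t ∧ projT S.alph w ∈ S.t := by
  rw [mem_weave_t, alph_weave, projT_projT_of_subset Set.subset_union_left,
    projT_projT_of_subset Set.subset_union_right]
  exact and_iff_right fun x hx => mem_of_mem_projT hx

end TraceStructure

open TraceStructure

theorem weave_assoc {α : Type*} (R S T : TraceStructure α) :
    weave (weave R S) T = weave R (weave S T) := by
  refine ext (Set.union_assoc _ _ _) (Set.union_assoc _ _ _) (Set.ext fun w => ?_)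
  rw [mem_weave_t (R := weave R S), mem_weave_t (S := weave S T),
    projT_alph_mem_weave_t_iff, projT_alph_mem_weave_t_iff, alph_weave, alph_weave, Set.union_assoc, and_assoc]
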